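/- arXiv:1504.06317 — 3 statements merged into one kernel-verified Lean document; each statement's English description precedes it below -/
import Mathlib

section
/- For real q with 0 < q < 1 and u ∈ 1/6 + (1/3)ℤ, one has θ₂(u, q^{1/2}) = (e^{πiu} + e^{-πiu})·q^{1/8}·γ(q), where γ(q) = Σ_{j≥0} (-1)^j q^{3j(3j+1)/2} - (-1)^j q^{(3j+2)(3j+3)/2}. -/
/-! Writing `A = e^{πiu}` and `d = ±(m + 1/2)`, the theta series `θ₂(u, q^{1/2})` becomes
`q^{1/8} Σ_{m ≥ 0} (A^{2m+1} + A^{-(2m+1)}) q^{m(m+1)/2}`. For `u ∈ 1/6 + ℤ/3` we have `A⁶ = -1`,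
so grouping `m` by its residue mod 3, the class `m ≡ 1` cancels (`A³ + A⁻³ = 0`) and the classes
`m ≡ 0, 2` give `±(-1)^j (A + A⁻¹)`, which are the two terms of `γ(q)`. -/

open Complex

/-- `θ₂(u,q) = Σ_{d ∈ ℤ+1/2} e^{2πiud} q^{d²}` for a real nome `q > 0`, with
`q^{d²} = exp(d² log q)` computed with the real logarithm (`Real.rpow`). -/
noncomputable def theta2Real (u : ℂ) (q : ℝ) : ℂ :=
  ∑' n : ℤ, Complex.exp (2 * Real.pi * Complex.I * u * ((n : ℂ) + 1 / 2)) *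
    ((q ^ (((n : ℝ) + 1 / 2) ^ 2) : ℝ) : ℂ)

/-- `γ(q) = Σ_{j ≥ 0} (-1)^j q^{3j(3j+1)/2} - (-1)^j q^{(3j+2)(3j+3)/2}`
(all exponents are integers). -/
noncomputable def gammaSeries (q : ℝ) : ℂ :=
  ∑' j : ℕ, ((-1 : ℂ) ^ j * (q : ℂ) ^ (3 * j * (3 * j + 1) / 2) -
    (-1 : ℂ) ^ j * (q : ℂ) ^ ((3 * j + 2) * (3 * j + 3) / 2))

lemma Nat.le_mul_succ_div_two (m : ℕ) : m ≤ m * (m + 1) / 2 := by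
  rw [Nat.le_div_iff_mul_le two_pos]
  rcases m with _ | m
  · simp
  · exact Nat.mul_le_mul_left _ (by omega)

lemma tsum_eq_tsum_sum_fin {R : Type*} [AddCommGroup R] [TopologicalSpace R]
    [IsTopologicalAddGroup R] [T2Space R] {f : ℕ → R} (hf : Summable f) (N : ℕ) [NeZero N] :
    ∑' n, f n = ∑' j, ∑ i : Fin N, f (j * N + i) := by
  have hf' : Summable fun p ↦ f ((Nat.divModEquiv N).symm p) :=
    (Nat.divModEquiv N).symm.summable_iff.mpr hf
  rw [← (Nat.divModEquiv N).symm.tsum_eq f, hf'.tsum_prod' fun _ ↦ .of_finite]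
  simp [tsum_fintype]

/-- With `A = e^{πiu}`, the summands of `θ₂(u, q^{1/2})` at `d = ±(m + 1/2)` are
`q^{1/8}` times `theta2Term A q m` and `theta2Term A⁻¹ q m`, since `d²/2 = m(m+1)/2 + 1/8`. -/
noncomputable def theta2Term (A : ℂ) (q : ℝ) (m : ℕ) : ℂ :=
  A ^ (2 * m + 1) * (q : ℂ) ^ (m * (m + 1) / 2)

lemma summable_theta2Term {q : ℝ} (hq0 : 0 ≤ q) (hq1 : q < 1) {A : ℂ} (hA : ‖A‖ = 1) :
    Summable (theta2Term A q) := by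
  refine Summable.of_norm_bounded (summable_geometric_of_lt_one hq0 hq1) fun m ↦ ?_
  rw [theta2Term, norm_mul, norm_pow, norm_pow, hA, one_pow, one_mul, norm_real,
    Real.norm_of_nonneg hq0]
  exact pow_le_pow_of_le_one hq0 hq1.le m.le_mul_succ_div_two

lemma summable_theta2Term_add_inv {q : ℝ} (hq0 : 0 ≤ q) (hq1 : q < 1) {A : ℂ} (hA : ‖A‖ = 1) :
    Summable fun m ↦ theta2Term A q m + theta2Term A⁻¹ q m :=
  (summable_theta2Term hq0 hq1 hA).add
    (summable_theta2Term hq0 hq1 (by rw [norm_inv, hA, inv_one]))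

lemma rpow_half_rpow_sq_add_half {q : ℝ} (hq : 0 < q) (m : ℕ) :
    (q ^ ((1 : ℝ) / 2)) ^ (((m : ℝ) + 1 / 2) ^ 2) = q ^ (m * (m + 1) / 2) * q ^ ((1 : ℝ) / 8) := by
  have hexp : (1 / 2 : ℝ) * ((m : ℝ) + 1 / 2) ^ 2 = ((m * (m + 1) / 2 : ℕ) : ℝ) + 1 / 8 := by
    rw [Nat.cast_div (Nat.even_mul_succ_self m).two_dvd two_ne_zero]
    push_cast
    ring
  rw [← Real.rpow_mul hq.le, hexp, Real.rpow_add hq, Real.rpow_natCast]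

lemma theta2Real_summand_natCast {q : ℝ} (hq : 0 < q) (u : ℂ) (m : ℕ) :
    exp (2 * Real.pi * I * u * (((m : ℤ) : ℂ) + 1 / 2)) *
        (((q ^ ((1 : ℝ) / 2)) ^ ((((m : ℤ) : ℝ) + 1 / 2) ^ 2) : ℝ) : ℂ) =
      (q ^ ((1 : ℝ) / 8) : ℝ) * theta2Term (exp (Real.pi * I * u)) q m := by
  have harg : 2 * Real.pi * I * u * (((m : ℤ) : ℂ) + 1 / 2) =
      (2 * m + 1 : ℕ) * (Real.pi * I * u) := by push_cast; ring
  rw [harg, exp_nat_mul, Int.cast_natCast, rpow_half_rpow_sq_add_half hq, theta2Term]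
  push_cast
  ring

lemma theta2Real_summand_neg_natCast_sub_one {q : ℝ} (hq : 0 < q) (u : ℂ) (m : ℕ) :
    exp (2 * Real.pi * I * u * (((-(m + 1) : ℤ) : ℂ) + 1 / 2)) *
        (((q ^ ((1 : ℝ) / 2)) ^ ((((-(m + 1) : ℤ) : ℝ) + 1 / 2) ^ 2) : ℝ) : ℂ) =
      (q ^ ((1 : ℝ) / 8) : ℝ) * theta2Term (exp (Real.pi * I * u))⁻¹ q m := by
  have harg : 2 * Real.pi * I * u * (((-(m + 1) : ℤ) : ℂ) + 1 / 2) =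
      -((2 * m + 1 : ℕ) * (Real.pi * I * u)) := by push_cast; ring
  have hsq : ((((-(m + 1) : ℤ) : ℝ) + 1 / 2) ^ 2) = ((m : ℝ) + 1 / 2) ^ 2 := by push_cast; ring
  rw [harg, exp_neg, exp_nat_mul, hsq, rpow_half_rpow_sq_add_half hq, theta2Term, inv_pow]
  push_cast
  ring

theorem theta2Real_rpow_half_eq_tsum {q : ℝ} (hq0 : 0 < q) (hq1 : q < 1) {u : ℂ}
    (hu : u.im = 0) :
    theta2Real u (q ^ ((1 : ℝ) / 2)) = (q ^ ((1 : ℝ) / 8) : ℝ) *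
      ∑' m, (theta2Term (exp (Real.pi * I * u)) q m +
        theta2Term (exp (Real.pi * I * u))⁻¹ q m) := by
  have hA : ‖exp (Real.pi * I * u)‖ = 1 := by simp [norm_exp, hu]
  have hs := summable_theta2Term hq0.le hq1 hA
  have hs' := summable_theta2Term hq0.le hq1 (by rw [norm_inv, hA, inv_one])
  rw [theta2Real, tsum_of_nat_of_neg_add_one
      ((hs.mul_left _).congr fun m ↦ (theta2Real_summand_natCast hq0 u m).symm)
      ((hs'.mul_left _).congr fun m ↦ (theta2Real_summand_neg_natCast_sub_one hq0 u m).symm),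
    tsum_congr (theta2Real_summand_natCast hq0 u),
    tsum_congr (theta2Real_summand_neg_natCast_sub_one hq0 u),
    tsum_mul_left, tsum_mul_left, ← mul_add, hs.tsum_add hs']

lemma theta2Term_add_inv_sum_fin_three {A : ℂ} (hA : A ^ 6 = -1) (q : ℝ) (j : ℕ) :
    ∑ i : Fin 3, (theta2Term A q (j * 3 + i) + theta2Term A⁻¹ q (j * 3 + i)) =
      (A + A⁻¹) * ((-1 : ℂ) ^ j * (q : ℂ) ^ (3 * j * (3 * j + 1) / 2) -
        (-1 : ℂ) ^ j * (q : ℂ) ^ ((3 * j + 2) * (3 * j + 3) / 2)) := by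
  have hA0 : A ≠ 0 := by rintro rfl; norm_num at hA
  have hApow (r : ℕ) : A ^ (6 * j + r) = (-1) ^ j * A ^ r := by rw [pow_add, pow_mul, hA]
  have hAinvpow (r : ℕ) : A⁻¹ ^ (6 * j + r) = (-1) ^ j * A⁻¹ ^ r := by
    rw [pow_add, pow_mul, inv_pow, hA]; norm_num
  have h5 : A ^ 5 = -A⁻¹ := by field_simp; linear_combination hA
  have h3 : A⁻¹ ^ 3 = -A ^ 3 := by field_simp; linear_combination hA
  have h5' : A⁻¹ ^ 5 = -A := by rw [inv_pow, h5, inv_neg, inv_inv]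
  simp only [Fin.sum_univ_three, Fin.val_zero, Fin.val_one, Fin.val_two, theta2Term]
  rw [show 2 * (j * 3 + 0) + 1 = 6 * j + 1 by ring, show 2 * (j * 3 + 1) + 1 = 6 * j + 3 by ring,
    show 2 * (j * 3 + 2) + 1 = 6 * j + 5 by ring, show j * 3 + 0 = 3 * j by ring,
    show j * 3 + 2 = 3 * j + 2 by ring, hApow, hApow, hApow, hAinvpow, hAinvpow, hAinvpow,
    h5, h5', h3]
  ring

lemma exp_pi_mul_I_pow_six (k : ℤ) : exp (Real.pi * I * (1 / 6 + k / 3)) ^ 6 = -1 := by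
  rw [← exp_nat_mul, show ((6 : ℕ) : ℂ) * (Real.pi * I * (1 / 6 + k / 3)) =
      Real.pi * I + k * (2 * Real.pi * I) by push_cast; ring,
    exp_add, exp_pi_mul_I, exp_int_mul_two_pi_mul_I, mul_one]

/-- For `0 < q < 1` and `u ∈ 1/6 + (1/3)ℤ`,
`θ₂(u, q^{1/2}) = (e^{πiu} + e^{-πiu}) q^{1/8} γ(q)`. -/
theorem stmt12 (q : ℝ) (hq0 : 0 < q) (hq1 : q < 1) (u : ℂ)
    (hu : ∃ k : ℤ, u = 1 / 6 + (k : ℂ) / 3) :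
    theta2Real u (q ^ ((1 : ℝ) / 2)) =
      (Complex.exp (Real.pi * Complex.I * u) + Complex.exp (-(Real.pi * Complex.I * u))) *
        ((q ^ ((1 : ℝ) / 8) : ℝ) : ℂ) * gammaSeries q := by
  obtain ⟨k, rfl⟩ := hu
  have hA : ‖exp (Real.pi * I * (1 / 6 + k / 3))‖ = 1 := by simp [norm_exp]
  rw [theta2Real_rpow_half_eq_tsum hq0 hq1 (by simp),
    tsum_eq_tsum_sum_fin (summable_theta2Term_add_inv hq0.le hq1 hA) 3,
    tsum_congr (theta2Term_add_inv_sum_fin_three (exp_pi_mul_I_pow_six k) q), tsum_mul_left,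
    gammaSeries, exp_neg]
  ring
end

section
/- For any η ∈ ℂ[[q]], there exists a unique formal power series β ∈ q + q²·ℂ[[q]] such that η(β(q))·β'(q) - β''(q)/β'(q) = 0 in ℂ[[q]]. -/
/-!
Since `β'(0) = 1`, `β'` is invertible and the equation is equivalent to `η(β) β'² = β''`.
Comparing coefficients of `qⁿ`, the right side is `(n+1)(n+2) β_{n+2}`, while the left side
only involves `β_0, …, β_{n+1}`. So the equation is a recursion determining every coefficient
from `β_0 = 0` and `β_1 = 1`.
-/

open PowerSeries

/-- Formal composition `η ∘ β` of power series (valid when `β` has zero constant term):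
the `n`-th coefficient is `Σ_{k ≤ n} η_k · (coeff of qⁿ in βᵏ)`. -/
noncomputable def compPS (η β : PowerSeries ℂ) : PowerSeries ℂ :=
  PowerSeries.mk fun n =>
    ∑ k ∈ Finset.range (n + 1), PowerSeries.coeff k η * PowerSeries.coeff n (β ^ k)

theorem existsUnique_forall_eq_of_congr_lt {α : Type*} [Nonempty α] (G : ℕ → (ℕ → α) → α)
    (hG : ∀ n f g, (∀ i < n, f i = g i) → G n f = G n g) :
    ∃! f : ℕ → α, ∀ n, f n = G n f := by
  let f : ℕ → α := wellFounded_lt.fix fun n rec =>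
    G n fun i => if h : i < n then rec i h else Classical.arbitrary α
  have hf : ∀ n, f n = G n f := fun n => by
    rw [show f n = _ from wellFounded_lt.fix_eq _ n]
    exact hG n _ _ fun i hi => dif_pos hi
  refine ⟨f, hf, fun g hg => funext fun n => ?_⟩
  induction n using Nat.strong_induction_on with
  | _ n ih => rw [hg n, hf n, hG n g f ih]

theorem PowerSeries.coeff_pow_congr {R : Type*} [CommSemiring R] {f g : PowerSeries R} {n : ℕ}
    (h : ∀ i ≤ n, coeff i f = coeff i g) (k : ℕ) : coeff n (f ^ k) = coeff n (g ^ k) := by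
  induction k generalizing n with
  | zero => simp
  | succ k ih =>
    rw [pow_succ, pow_succ, coeff_mul, coeff_mul]
    refine Finset.sum_congr rfl fun p hp => ?_
    rw [Finset.HasAntidiagonal.mem_antidiagonal] at hp
    rw [ih fun i hi => h i (by omega), h p.2 (by omega)]

theorem PowerSeries.coeff_derivative_derivative {R : Type*} [CommSemiring R] (f : PowerSeries R)
    (n : ℕ) : coeff n (derivative R (derivative R f)) = ((n + 1) * (n + 2)) * coeff (n + 2) f := by
  rw [coeff_derivative, coeff_derivative]
  push_cast
  ring

theorem PowerSeries.mul_sub_mul_inv_eq_zero_iff {k : Type*} [Field k] {a b u : PowerSeries k}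
    (hu : constantCoeff u ≠ 0) : a * u - b * u⁻¹ = 0 ↔ a * u ^ 2 = b := by
  rw [sub_eq_zero, eq_mul_inv_iff_mul_eq hu, mul_assoc, sq]

theorem coeff_compPS_congr (η : PowerSeries ℂ) {β γ : PowerSeries ℂ} {n : ℕ}
    (h : ∀ i ≤ n, coeff i β = coeff i γ) : coeff n (compPS η β) = coeff n (compPS η γ) := by
  simp only [compPS, coeff_mk]
  exact Finset.sum_congr rfl fun k _ => by rw [coeff_pow_congr h]

theorem coeff_compPS_mul_derivative_sq_congr (η : PowerSeries ℂ) {β γ : PowerSeries ℂ} {n : ℕ}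
    (h : ∀ i ≤ n + 1, coeff i β = coeff i γ) :
    coeff n (compPS η β * derivative ℂ β ^ 2) = coeff n (compPS η γ * derivative ℂ γ ^ 2) := by
  rw [coeff_mul, coeff_mul]
  refine Finset.sum_congr rfl fun p hp => ?_
  rw [Finset.HasAntidiagonal.mem_antidiagonal] at hp
  have hd : ∀ i ≤ p.2, coeff i (derivative ℂ β) = coeff i (derivative ℂ γ) := fun i hi => by
    rw [coeff_derivative, coeff_derivative, h (i + 1) (by omega)]
  rw [coeff_compPS_congr η fun i hi => h i (by omega), coeff_pow_congr hd]

/-- Solving `η(β) β'² = β''` for the coefficient of `q^(n+2)`. -/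
noncomputable def coeffRecursion (η : PowerSeries ℂ) : ℕ → (ℕ → ℂ) → ℂ
  | 0, _ => 0
  | 1, _ => 1
  | n + 2, f => coeff n (compPS η (mk f) * derivative ℂ (mk f) ^ 2) / ((n + 1) * (n + 2))

theorem coeffRecursion_congr (η : PowerSeries ℂ) (n : ℕ) (f g : ℕ → ℂ) (h : ∀ i < n, f i = g i) :
    coeffRecursion η n f = coeffRecursion η n g := by
  match n with
  | 0 | 1 => rfl
  | n + 2 =>
    simp only [coeffRecursion]
    rw [coeff_compPS_mul_derivative_sq_congr (γ := mk g) η fun i hi => by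
      rw [coeff_mk, coeff_mk, h i (by omega)]]

theorem ode_iff_coeff_eq_coeffRecursion (η β : PowerSeries ℂ) :
    ((constantCoeff β = 0 ∧ coeff 1 β = 1) ∧
      compPS η β * derivative ℂ β - derivative ℂ (derivative ℂ β) * (derivative ℂ β)⁻¹ = 0) ↔
    ∀ n, coeff n β = coeffRecursion η n (fun i => coeff i β) := by
  have hβ : mk (fun i => coeff i β) = β := ext fun n => coeff_mk _ _
  have hne : ∀ n : ℕ, ((n : ℂ) + 1) * (n + 2) ≠ 0 := fun n => by norm_cast
  have hunit : coeff 1 β = 1 → constantCoeff (derivative ℂ β) ≠ 0 := fun h1 => by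
    simp [← coeff_zero_eq_constantCoeff_apply, coeff_derivative, h1]
  have hrec : ∀ n, coeffRecursion η (n + 2) (fun i => coeff i β) =
      coeff n (compPS η β * derivative ℂ β ^ 2) / ((n + 1) * (n + 2)) := fun n => by
    rw [coeffRecursion, hβ]
  constructor
  · rintro ⟨⟨h0, h1⟩, hode⟩ (_ | _ | n)
    · simpa [coeffRecursion] using h0
    · exact h1
    · rw [mul_sub_mul_inv_eq_zero_iff (hunit h1)] at hode
      rw [hrec, hode, coeff_derivative_derivative, mul_div_cancel_left₀ _ (hne n)]
  · intro h
    have h1 : coeff 1 β = 1 := h 1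
    refine ⟨⟨by simpa [coeffRecursion] using h 0, h1⟩,
      (mul_sub_mul_inv_eq_zero_iff (hunit h1)).2 (ext fun n => ?_)⟩
    rw [coeff_derivative_derivative, h (n + 2), hrec, mul_div_cancel₀ _ (hne n)]

/-- For any `η ∈ ℂ[[q]]` there is a unique `β ∈ q + q²ℂ[[q]]` such that
`η(β(q)) β'(q) - β''(q)/β'(q) = 0`. -/
theorem stmt14 (η : PowerSeries ℂ) :
    ∃! β : PowerSeries ℂ,
      (PowerSeries.constantCoeff β = 0 ∧ PowerSeries.coeff 1 β = 1) ∧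
      compPS η β * PowerSeries.derivative ℂ β -
        PowerSeries.derivative ℂ (PowerSeries.derivative ℂ β) *
          (PowerSeries.derivative ℂ β)⁻¹ = 0 := by
  simp only [ode_iff_coeff_eq_coeffRecursion]
  obtain ⟨f, hf, hf_unique⟩ := existsUnique_forall_eq_of_congr_lt _ (coeffRecursion_congr η)
  refine ⟨mk f, by simpa only [coeff_mk] using hf, fun β hβ => ext fun n => ?_⟩
  rw [coeff_mk, ← hf_unique (fun i => coeff i β) hβ]
end

section
/- Consider the lattice ℤ^{10} with form diag(1,-1,…,-1), basis L, A₀,…,A₈, and K = 3L - Σᵢ Aᵢ. The sublattice Λ₀ = {X : K·X = 0 and A₀·X = 0} is a rank-8 lattice on which the bilinear form is even and negative definite. -/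
/-- The intersection form `diag(1,-1,…,-1)` on `ℤ^{10}` with basis `L, A₀, …, A₈`
(index `0` corresponds to `L`, index `i+1` to `Aᵢ`). -/
def interForm (x y : Fin 10 → ℤ) : ℤ :=
  ∑ i : Fin 10, (if i = 0 then (1 : ℤ) else -1) * x i * y i

/-- `K = 3L - A₀ - ⋯ - A₈`. -/
def Kvec : Fin 10 → ℤ := fun i => if i = 0 then 3 else -1

/-- `A₀` in coordinates. -/
def A0vec : Fin 10 → ℤ := fun i => if i = 1 then 1 else 0

lemma interForm_add (v x y : Fin 10 → ℤ) :
    interForm v (x + y) = interForm v x + interForm v y := by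
  simp [interForm, mul_add, Finset.sum_add_distrib]

lemma interForm_smul (v : Fin 10 → ℤ) (c : ℤ) (x : Fin 10 → ℤ) :
    interForm v (c • x) = c * interForm v x := by
  simp only [interForm, Pi.smul_apply, smul_eq_mul, Finset.mul_sum]
  exact Finset.sum_congr rfl fun i _ => by ring

/-- The sublattice `Λ₀ = {X : K·X = 0 and A₀·X = 0}`. -/
def Lambda0 : Submodule ℤ (Fin 10 → ℤ) where
  carrier := {x | interForm Kvec x = 0 ∧ interForm A0vec x = 0}
  zero_mem' := by constructor <;> simp [interForm]
  add_mem' := by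
    rintro a b ⟨h1, h2⟩ ⟨h3, h4⟩
    exact ⟨by rw [interForm_add, h1, h3, add_zero],
      by rw [interForm_add, h2, h4, add_zero]⟩
  smul_mem' := by
    rintro c a ⟨h1, h2⟩
    exact ⟨by rw [interForm_smul, h1, mul_zero],
      by rw [interForm_smul, h2, mul_zero]⟩

/-!
`K` has odd coordinates, so it is a characteristic vector of the odd unimodular form:
`X·X ≡ K·X (mod 2)`, which makes the form even on `K^⊥`. On `Λ₀` the `A₀`-coordinate vanishes and
`K·X = 0` reads `3x₀ = -(x₂ + ⋯ + x₉)`; Cauchy–Schwarz over these eight coordinates gives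
`9x₀² ≤ 8 Σ xᵢ²`, hence `X·X = x₀² - Σ xᵢ² < 0` unless `X = 0`.
-/

lemma two_dvd_mul_sub_of_odd (x : ℤ) {k : ℤ} (hk : Odd k) : 2 ∣ x * (x - k) := by
  rw [← even_iff_two_dvd, Int.even_mul, Int.even_sub]
  have := Int.not_even_iff_odd.mpr hk
  tauto

lemma two_dvd_interForm_self_sub_Kvec (x : Fin 10 → ℤ) :
    2 ∣ interForm x x - interForm Kvec x := by
  rw [interForm, interForm, ← Finset.sum_sub_distrib]
  refine Finset.dvd_sum fun i _ => ?_
  have hK : Odd (Kvec i) := by unfold Kvec; split_ifs <;> decide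
  convert dvd_mul_of_dvd_right (two_dvd_mul_sub_of_odd (x i) hK) (if i = 0 then (1 : ℤ) else -1)
    using 1
  ring

lemma interForm_apply (x y : Fin 10 → ℤ) :
    interForm x y = x 0 * y 0 - x 1 * y 1 - ∑ j : Fin 8, x j.succ.succ * y j.succ.succ := by
  rw [interForm, Fin.sum_univ_succ, Fin.sum_univ_succ]
  simp only [Fin.isValue, ↓reduceIte, one_mul, Fin.succ_zero_eq_one, one_ne_zero, neg_mul,
    Fin.succ_ne_zero, Finset.sum_neg_distrib]
  ring

lemma interForm_self (x : Fin 10 → ℤ) :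
    interForm x x = x 0 ^ 2 - x 1 ^ 2 - ∑ j : Fin 8, x j.succ.succ ^ 2 := by
  simp only [interForm_apply, sq]

lemma interForm_Kvec (x : Fin 10 → ℤ) :
    interForm Kvec x = 3 * x 0 + x 1 + ∑ j : Fin 8, x j.succ.succ := by
  simp [interForm_apply, Kvec, Fin.succ_ne_zero]

lemma interForm_A0vec (x : Fin 10 → ℤ) : interForm A0vec x = -x 1 := by
  have hne : ∀ j : Fin 8, j.succ.succ ≠ 1 := by decide
  simp [interForm_apply, A0vec, hne]

lemma mem_Lambda0 {x : Fin 10 → ℤ} :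
    x ∈ Lambda0 ↔ x 1 = 0 ∧ 3 * x 0 + ∑ j : Fin 8, x j.succ.succ = 0 := by
  change interForm Kvec x = 0 ∧ interForm A0vec x = 0 ↔ _
  rw [interForm_Kvec, interForm_A0vec]
  constructor <;> rintro ⟨hK, hA⟩ <;> constructor <;> linarith

lemma eq_zero_of_coords_eq_zero {x : Fin 10 → ℤ} (h0 : x 0 = 0) (h1 : x 1 = 0)
    (hy : (fun j : Fin 8 => x j.succ.succ) = 0) : x = 0 := by
  ext i
  exact Fin.cases h0 (Fin.cases h1 fun j => congrFun hy j) i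

/-- A point of `Λ₀` has `x 1 = 0` and is determined by `x 0, x 2, …, x 8`: `x 9` is recovered
from `K·x = 0`. -/
def Lambda0EquivFun : Lambda0 ≃ₗ[ℤ] (Fin 8 → ℤ) where
  toFun x := ![x.1 0, x.1 2, x.1 3, x.1 4, x.1 5, x.1 6, x.1 7, x.1 8]
  invFun c := ⟨![c 0, 0, c 1, c 2, c 3, c 4, c 5, c 6, c 7,
      -(3 * c 0) - c 1 - c 2 - c 3 - c 4 - c 5 - c 6 - c 7],
    mem_Lambda0.mpr ⟨rfl, by simp [Fin.sum_univ_succ]⟩⟩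
  map_add' x y := by ext j; fin_cases j <;> rfl
  map_smul' c x := by ext j; fin_cases j <;> rfl
  left_inv := by
    rintro ⟨x, hx⟩
    obtain ⟨h1, hK⟩ := mem_Lambda0.mp hx
    simp only [Fin.isValue, Fin.sum_univ_succ, Fin.succ_zero_eq_one, Fin.succ_one_eq_two,
      Fin.reduceSucc, Finset.univ_unique, Fin.default_eq_zero, Finset.sum_singleton] at hK
    ext i
    fin_cases i <;>
      simp only [Fin.isValue, Matrix.cons_val_zero, Matrix.cons_val_one, Matrix.cons_val,
        Fin.zero_eta, Fin.mk_one, Fin.reduceFinMk] <;>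
      linarith
  right_inv c := by ext j; fin_cases j <;> rfl

lemma sq_sub_sum_sq_neg_of_mul_add_sum_eq_zero {ι : Type*} [Fintype ι] {c a : ℤ} {y : ι → ℤ}
    (hc : (Fintype.card ι : ℤ) < c ^ 2) (h : c * a + ∑ i, y i = 0) (hne : a ≠ 0 ∨ y ≠ 0) :
    a ^ 2 - ∑ i, y i ^ 2 < 0 := by
  have cauchy_schwarz := sq_sum_le_card_mul_sum_sq (s := Finset.univ) (f := y)
  rw [Finset.card_univ, show ∑ i, y i = -(c * a) by linarith] at cauchy_schwarz
  have hc0 : c ≠ 0 := by rintro rfl; rw [zero_pow two_ne_zero] at hc; omega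
  have hS : 0 < ∑ i, y i ^ 2 := by
    refine (Finset.sum_nonneg fun i _ => sq_nonneg (y i)).lt_of_ne fun hS => ?_
    have hy : y = 0 := funext fun i => pow_eq_zero_iff two_ne_zero |>.mp <|
      (Finset.sum_eq_zero_iff_of_nonneg fun i _ => sq_nonneg (y i)).mp hS.symm i (Finset.mem_univ i)
    have ha : a = 0 := by simpa [hy, hc0] using h
    exact hne.elim (· ha) (· hy)
  nlinarith

/-- `Λ₀` is a rank-8 lattice on which the intersection form is even and
negative definite. -/
theorem stmt18 :
    Nonempty (Module.Basis (Fin 8) ℤ Lambda0) ∧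
    (∀ x : Fin 10 → ℤ, x ∈ Lambda0 → 2 ∣ interForm x x) ∧
    (∀ x : Fin 10 → ℤ, x ∈ Lambda0 → x ≠ 0 → interForm x x < 0) := by
  refine ⟨⟨Module.Basis.ofEquivFun Lambda0EquivFun⟩, fun x hx => ?_, fun x hx hx0 => ?_⟩
  · have hK : interForm Kvec x = 0 := hx.1
    simpa [hK] using two_dvd_interForm_self_sub_Kvec x
  · obtain ⟨h1, hK⟩ := mem_Lambda0.mp hx
    have hne : x 0 ≠ 0 ∨ (fun j : Fin 8 => x j.succ.succ) ≠ 0 := by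
      by_contra! h
      exact hx0 (eq_zero_of_coords_eq_zero h.1 h1 h.2)
    rw [interForm_self, h1]
    simpa using sq_sub_sum_sq_neg_of_mul_add_sum_eq_zero (c := 3) (by simp) hK hne
end
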